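/- Let C₂ be a p × n real measurement matrix (each row contains exactly one entry equal to 1 and exactly one entry equal to −1 with all other entries 0, and C₂ has full row rank), and let F be an m × n real matrix. Then there exists an m × p real matrix K satisfying K C₂ = F if and only if there exists a family of vectors v_{ij} ∈ ℝ^m, indexed by pairs of distinct vertices i < j lying in a common connected component of the measurement graph of C₂, such that F x = Σ v_{ij} (x_i − x_j) for every x ∈ ℝ^n. -/

import Mathlib

open Matrix BigOperators

attribute [local instance] Classical.propDecidable

/-- `C₂` is a measurement matrix: each row contains exactly one entry equal to `1` and
exactly one entry equal to `-1`, all other entries are `0`, and `C₂` has full row rank. -/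
def IsMeasurementMatrix {p n : ℕ} (C₂ : Matrix (Fin p) (Fin n) ℝ) : Prop :=
  (∀ ℓ : Fin p, ∃ i j : Fin n, i ≠ j ∧ C₂ ℓ i = 1 ∧ C₂ ℓ j = -1 ∧
    ∀ k : Fin n, k ≠ i → k ≠ j → C₂ ℓ k = 0) ∧ C₂.rank = p

/-- The measurement graph of `C₂`: the simple graph on `{1,…,n}` with an edge between
distinct `i` and `j` exactly when some row `ℓ` has `C₂ ℓ i ≠ 0` and `C₂ ℓ j ≠ 0`. -/
def measGraph {p n : ℕ} (C₂ : Matrix (Fin p) (Fin n) ℝ) : SimpleGraph (Fin n) :=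
  SimpleGraph.fromRel (fun i j => ∃ ℓ : Fin p, C₂ ℓ i ≠ 0 ∧ C₂ ℓ j ≠ 0)

/-!
Both sides say that the rows of `F` lie in a fixed subspace of `ℝⁿ`: `K C₂ = F` says that they
lie in the row space of `C₂`, the decomposition that they lie in the span of the vectors
`eᵢ - eⱼ` over pairs `i < j` in a common component of the measurement graph. The two spaces
coincide: every row of `C₂` is `e_a - e_b` for an edge `ab`, and conversely `eᵢ - eⱼ` telescopes
along a walk from `i` to `j` into a signed sum of rows.
-/

theorem Matrix.exists_mul_eq_iff_forall_mem_span_row {R ι κ μ : Type*} [Semiring R] [Fintype ι]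
    (A : Matrix ι κ R) (F : Matrix μ κ R) :
    (∃ K : Matrix μ ι R, K * A = F) ↔ ∀ r, F r ∈ Submodule.span R (Set.range A.row) := by
  simp_rw [Submodule.mem_span_range_iff_exists_fun, row_def, ← vecMul_eq_sum]
  constructor
  · rintro ⟨K, rfl⟩ r
    exact ⟨K r, rfl⟩
  · intro h
    choose K hK using h
    exact ⟨K, funext hK⟩

theorem SimpleGraph.Reachable.single_sub_single_mem {V R : Type*} [DecidableEq V] [Ring R]
    {G : SimpleGraph V} {S : Submodule R (V → R)}
    (hadj : ∀ i j, G.Adj i j → Pi.single i 1 - Pi.single j 1 ∈ S) {i j : V}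
    (h : G.Reachable i j) :
    Pi.single i 1 - Pi.single j 1 ∈ S := by
  obtain ⟨w⟩ := h
  induction w with
  | nil => simp
  | cons hadj' _ ih => simpa using add_mem (hadj _ _ hadj') ih

section componentDiffMatrix

variable {V : Type*} [LinearOrder V] [DecidableEq V]

noncomputable def componentDiffMatrix (R : Type*) [Ring R] (G : SimpleGraph V) :
    Matrix (V × V) V R :=
  Matrix.of fun q =>
    if q.1 < q.2 ∧ G.Reachable q.1 q.2 then Pi.single q.1 1 - Pi.single q.2 1 else 0

section Ring

variable {R : Type*} [Ring R]

theorem componentDiffMatrix_row (G : SimpleGraph V) (q : V × V) :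
    (componentDiffMatrix R G).row q =
      if q.1 < q.2 ∧ G.Reachable q.1 q.2 then Pi.single q.1 1 - Pi.single q.2 1 else 0 :=
  rfl

theorem single_sub_single_mem_span_componentDiffMatrix {G : SimpleGraph V} {i j : V}
    (h : G.Reachable i j) :
    (Pi.single i 1 - Pi.single j 1 : V → R) ∈
      Submodule.span R (Set.range (componentDiffMatrix R G).row) := by
  have mem {a b : V} (hab : a < b) (h : G.Reachable a b) :
      (Pi.single a 1 - Pi.single b 1 : V → R) ∈
        Submodule.span R (Set.range (componentDiffMatrix R G).row) := by
    have hrow : (componentDiffMatrix R G).row (a, b) = Pi.single a 1 - Pi.single b 1 := by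
      rw [componentDiffMatrix_row, if_pos ⟨hab, h⟩]
    exact hrow ▸ Submodule.subset_span (Set.mem_range_self _)
  rcases lt_trichotomy i j with hij | rfl | hji
  · exact mem hij h
  · rw [sub_self]
    exact zero_mem _
  · simpa using neg_mem (mem hji h.symm)

theorem componentDiffMatrix_mulVec [Fintype V] (G : SimpleGraph V) (x : V → R) (q : V × V) :
    (componentDiffMatrix R G *ᵥ x) q =
      if q.1 < q.2 ∧ G.Reachable q.1 q.2 then x q.1 - x q.2 else 0 := by
  rw [mulVec_apply, componentDiffMatrix_row]
  split_ifs <;> simp [sub_dotProduct]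

end Ring

variable {R : Type*} [CommRing R] [Fintype V]

theorem mul_componentDiffMatrix_mulVec {μ : Type*} (G : SimpleGraph V)
    (K : Matrix μ (V × V) R) (x : V → R) :
    (K * componentDiffMatrix R G) *ᵥ x = ∑ i, ∑ j,
      if i < j ∧ G.Reachable i j then (x i - x j) • (fun r => K r (i, j)) else 0 := by
  ext r
  rw [← mulVec_mulVec, mulVec_apply_eq_sum, Fintype.sum_prod_type]
  simp only [componentDiffMatrix_mulVec, Finset.sum_apply]
  refine Finset.sum_congr rfl fun i _ => Finset.sum_congr rfl fun j _ => ?_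
  split_ifs <;> simp [mul_comm]

theorem exists_relative_decomposition_iff_exists_mul_componentDiffMatrix_eq {μ : Type*}
    (G : SimpleGraph V) (F : Matrix μ V R) :
    (∃ v : V → V → (μ → R), ∀ x : V → R, F *ᵥ x = ∑ i, ∑ j,
        if i < j ∧ G.Reachable i j then (x i - x j) • v i j else 0) ↔
      ∃ K : Matrix μ (V × V) R, K * componentDiffMatrix R G = F := by
  constructor
  · rintro ⟨v, hv⟩
    refine ⟨Matrix.of fun r q => v q.1 q.2 r, ext_iff_mulVec.2 fun x => ?_⟩
    rw [mul_componentDiffMatrix_mulVec, hv]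
    rfl
  · rintro ⟨K, rfl⟩
    exact ⟨fun i j r => K r (i, j), mul_componentDiffMatrix_mulVec G K⟩

end componentDiffMatrix

namespace IsMeasurementMatrix

variable {p n : ℕ} {C₂ : Matrix (Fin p) (Fin n) ℝ}

theorem exists_row_eq (hC : IsMeasurementMatrix C₂) (ℓ : Fin p) :
    ∃ a b, a ≠ b ∧ C₂ ℓ = Pi.single a 1 - Pi.single b 1 := by
  obtain ⟨a, b, hab, ha, hb, h0⟩ := hC.1 ℓ
  refine ⟨a, b, hab, funext fun k => ?_⟩
  by_cases hka : k = a
  · subst hka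
    simp [ha, hab]
  by_cases hkb : k = b
  · subst hkb
    simp [hb, hka]
  simp [h0 k hka hkb, hka, hkb]

theorem single_sub_single_mem_span_row (hC : IsMeasurementMatrix C₂) {i j : Fin n}
    (hij : (measGraph C₂).Adj i j) :
    (Pi.single i 1 - Pi.single j 1 : Fin n → ℝ) ∈
      Submodule.span ℝ (Set.range C₂.row) := by
  obtain ⟨hne, hℓ⟩ := (SimpleGraph.fromRel_adj _ _ _).1 hij
  obtain ⟨ℓ, hi, hj⟩ : ∃ ℓ, C₂ ℓ i ≠ 0 ∧ C₂ ℓ j ≠ 0 :=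
    hℓ.elim id fun ⟨ℓ, hj, hi⟩ => ⟨ℓ, hi, hj⟩
  obtain ⟨a, b, -, hrow⟩ := hC.exists_row_eq ℓ
  have hmem : C₂ ℓ ∈ Submodule.span ℝ (Set.range C₂.row) :=
    Submodule.subset_span (Set.mem_range_self ℓ)
  have endpoint {k : Fin n} (hk : C₂ ℓ k ≠ 0) : k = a ∨ k = b := by
    by_contra! h
    simp [hrow, h.1, h.2] at hk
  rcases endpoint hi with rfl | rfl <;> rcases endpoint hj with rfl | rfl
  · exact absurd rfl hne
  · rwa [← hrow]
  · simpa [hrow] using neg_mem hmem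
  · exact absurd rfl hne

theorem span_row_eq_span_row_componentDiffMatrix (hC : IsMeasurementMatrix C₂) :
    Submodule.span ℝ (Set.range C₂.row) =
      Submodule.span ℝ (Set.range (componentDiffMatrix ℝ (measGraph C₂)).row) := by
  refine Submodule.span_eq_span (Set.range_subset_iff.2 fun ℓ => SetLike.mem_coe.2 ?_)
    (Set.range_subset_iff.2 fun q => SetLike.mem_coe.2 ?_)
  · obtain ⟨a, b, hab, hrow⟩ := hC.exists_row_eq ℓ
    have hadj : (measGraph C₂).Adj a b :=
      (SimpleGraph.fromRel_adj _ _ _).2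
        ⟨hab, .inl ⟨ℓ, by simp [hrow, hab], by simp [hrow, hab]⟩⟩
    change C₂ ℓ ∈ _
    rw [hrow]
    exact single_sub_single_mem_span_componentDiffMatrix (R := ℝ) hadj.reachable
  · rw [componentDiffMatrix_row]
    split_ifs with hq
    · exact hq.2.single_sub_single_mem fun i j => hC.single_sub_single_mem_span_row
    · exact zero_mem _

end IsMeasurementMatrix

/-- For a measurement matrix `C₂` and an `m × n` matrix `F`, there exists
`K` with `K C₂ = F` iff `F` decomposes as a sum of relative maps over pairs `i < j`
lying in a common connected component of the measurement graph of `C₂`. -/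
theorem exists_factor_iff_relative_componentwise (m p n : ℕ)
    (C₂ : Matrix (Fin p) (Fin n) ℝ) (hC : IsMeasurementMatrix C₂)
    (F : Matrix (Fin m) (Fin n) ℝ) :
    (∃ K : Matrix (Fin m) (Fin p) ℝ, K * C₂ = F) ↔
    (∃ v : Fin n → Fin n → (Fin m → ℝ), ∀ x : Fin n → ℝ,
      F.mulVec x = ∑ i : Fin n, ∑ j : Fin n,
        if i < j ∧ (measGraph C₂).Reachable i j then (x i - x j) • v i j else 0) := by
  rw [exists_mul_eq_iff_forall_mem_span_row, hC.span_row_eq_span_row_componentDiffMatrix,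
    ← exists_mul_eq_iff_forall_mem_span_row]
  -- the two sides differ only in their `Decidable` instances for `i < j`
  convert (exists_relative_decomposition_iff_exists_mul_componentDiffMatrix_eq _ F).symm
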